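/- Let G be an inverse semigroup, H' ⊆ G a finite sub-inverse semigroup, and A a G-algebra. (a) For all s ∈ G and h ∈ G_H with s*·h ∈ G_H, one has s s*·h h* = h h* (i.e., s s* ≥ h h*) in 𝔽(G,A). (b) If moreover g ∈ G_H satisfies g*·s*·h ∈ H, then g g* = (s* h)(s* h)* and s*·h ≡ g. -/

import Mathlib

/-! Common setup: inverse semigroups, G-algebras, and the universal *-algebra 𝔽(G,A). -/

noncomputable section

/-- An inverse semigroup: a semigroup in which every element `g` has a unique
generalized inverse, denoted `star g`. -/
class InverseSemigroup (G : Type*) extends Semigroup G, Star G where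
  mul_star_mul_self : ∀ g : G, g * star g * g = g
  star_mul_self_mul_star : ∀ g : G, star g * g * star g = star g
  star_unique : ∀ g h : G, g * h * g = g → h * g * h = h → h = star g

namespace Green

/-! ### The free complex *-algebra on a set of generators

The free complex *-algebra on a set `Y` is realized as the monoid algebra of the free
monoid on the letters `Y × Bool` (a generator together with a formal star flag); its star
operation conjugates coefficients, reverses words and flips the star flags. -/

/-- The free complex *-algebra on the set `Y`. -/
abbrev FreeStar (Y : Type*) := MonoidAlgebra ℂ (FreeMonoid (Y × Bool))

namespace FreeStar

variable {Y : Type*}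

/-- Star of a word: reverse it and flip all star flags. -/
def wordStar (w : FreeMonoid (Y × Bool)) : FreeMonoid (Y × Bool) :=
  FreeMonoid.ofList (((FreeMonoid.toList w).map fun x => (x.1, !x.2)).reverse)

lemma wordStar_mul (v w : FreeMonoid (Y × Bool)) :
    wordStar (v * w) = wordStar w * wordStar v := by
  simp [wordStar, FreeMonoid.toList_mul]

lemma wordStar_wordStar (w : FreeMonoid (Y × Bool)) : wordStar (wordStar w) = w := by
  simp [wordStar, List.map_reverse, List.map_map, Function.comp_def]

/-- The star operation on the free complex *-algebra, as an additive map. -/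
def starAux : FreeStar Y →+ FreeStar Y :=
  (MonoidAlgebra.coeffAddEquiv.symm.toAddMonoidHom.comp
    ((Finsupp.mapDomain.addMonoidHom wordStar).comp
      (Finsupp.mapRange.addMonoidHom (starRingEnd ℂ).toAddMonoidHom))).comp
    MonoidAlgebra.coeffAddEquiv.toAddMonoidHom

lemma starAux_apply (f : FreeStar Y) :
    starAux f = MonoidAlgebra.ofCoeff
      (Finsupp.mapDomain wordStar (Finsupp.mapRange (starRingEnd ℂ) (map_zero _) f.coeff)) :=
  rfl

lemma starAux_single (w : FreeMonoid (Y × Bool)) (c : ℂ) :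
    starAux (MonoidAlgebra.single w c) = MonoidAlgebra.single (wordStar w) (starRingEnd ℂ c) := by
  rw [starAux_apply]
  simp only [MonoidAlgebra.single, Finsupp.mapRange_single, Finsupp.mapDomain_single,
    MonoidAlgebra.coeff_ofCoeff]

instance instStarRing : StarRing (FreeStar Y) where
  star := starAux
  star_involutive := by
    intro f
    induction f using MonoidAlgebra.induction_linear with
    | zero => simp
    | add f g hf hg => simp_all [map_add]
    | single w c => simp [starAux_single, wordStar_wordStar, starRingEnd_self_apply]
  star_mul := by
    intro f g
    show starAux (f * g) = starAux g * starAux f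
    induction f using MonoidAlgebra.induction_linear with
    | zero => simp
    | add f f' hf hf' => simp [mul_add, add_mul, map_add, hf, hf']
    | single w c =>
      induction g using MonoidAlgebra.induction_linear with
      | zero => simp
      | add g g' hg hg' => simp [mul_add, add_mul, map_add, hg, hg']
      | single v d =>
        simp only [MonoidAlgebra.single_mul_single, starAux_single, wordStar_mul, map_mul]
        rw [mul_comm]
  star_add := map_add _

end FreeStar

section GAlgebra

variable {G : Type*} [InverseSemigroup G]
variable {A : Type*} [NonUnitalNormedRing A] [StarRing A] [CStarRing A] [NormedSpace ℂ A]
  [IsScalarTower ℂ A A] [SMulCommClass ℂ A A] [StarModule ℂ A] [CompleteSpace A]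

/-- `α` is an action of the inverse semigroup `G` on the C*-algebra `A` making it a
`G`-algebra: a semigroup homomorphism `G → End(A)` into the *-endomorphisms of `A` such
that `g g*(a)·b = a·g g*(b)` for all `a b : A` and `g : G`. -/
structure IsGAlgebra (α : G → A →⋆ₙₐ[ℂ] A) : Prop where
  map_mul : ∀ g h : G, α (g * h) = (α g).comp (α h)
  central : ∀ (g : G) (a b : A), α (g * star g) a * b = a * α (g * star g) b

variable (α : G → A →⋆ₙₐ[ℂ] A)

/-- The generator of the free *-algebra corresponding to `a ∈ A`. -/
def genA (a : A) : FreeStar (A ⊕ G) := MonoidAlgebra.single (FreeMonoid.of (Sum.inl a, false)) 1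

/-- The generator of the free *-algebra corresponding to `g ∈ G`. -/
def genG (g : G) : FreeStar (A ⊕ G) := MonoidAlgebra.single (FreeMonoid.of (Sum.inr g, false)) 1

/-- The defining relations of `𝔽(G,A)`: the *-algebra relations of `A` are respected, the
multiplication and involution of `G` are respected, and `g(a)·g g* = g·a·g*`,
`[g g*, a] = 0` hold; the relation is moreover closed under `star`, so that the ideal
generated by it is a two-sided *-ideal. -/
inductive Rel : FreeStar (A ⊕ G) → FreeStar (A ⊕ G) → Prop
  | add_A (a b : A) : Rel (genA (G := G) (a + b)) (genA a + genA b)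
  | smul_A (c : ℂ) (a : A) : Rel (genA (G := G) (c • a)) (c • genA a)
  | mul_A (a b : A) : Rel (genA (G := G) (a * b)) (genA a * genA b)
  | star_A (a : A) : Rel (genA (G := G) (star a)) (star (genA a))
  | mul_G (g h : G) : Rel (genG (A := A) (g * h)) (genG g * genG h)
  | star_G (g : G) : Rel (genG (A := A) (star g)) (star (genG g))
  | act (g : G) (a : A) :
      Rel (genA (α g a) * genG g * genG (star g)) (genG g * genA a * genG (star g))
  | comm (g : G) (a : A) :
      Rel (genG g * genG (star g) * genA a) (genA a * genG g * genG (star g))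
  | star_cl {x y} : Rel x y → Rel (star x) (star y)

/-- The universal *-algebra `𝔽(G,A)`: the quotient of the free complex *-algebra on the
set `A ⊔ G` by the two-sided *-ideal generated by the defining relations. -/
abbrev F := RingQuot (Rel α)

instance : StarRing (F α) := RingQuot.starRing _ (fun _ _ h => Rel.star_cl h)

/-- The canonical copy of `a ∈ A` inside `𝔽(G,A)`. -/
def ιA (a : A) : F α := RingQuot.mkAlgHom ℂ (Rel α) (genA a)

/-- The canonical copy of `g ∈ G` inside `𝔽(G,A)`. -/
def ιG (g : G) : F α := RingQuot.mkAlgHom ℂ (Rel α) (genG g)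

/-- The element `e₀(1-e₁)⋯(1-eₙ)` of `𝔽(G,A)` (product expanded multiplicatively),
given `e₀` and the list `[e₁, …, eₙ]`. -/
def elemP (e₀ : G) (l : List G) : F α :=
  l.foldl (fun p e => p - p * ιG α e) (ιG α e₀)

/-- The element `g·e₀(1-e₁)⋯(1-eₙ)` of `𝔽(G,A)`. -/
def elemGE (g e₀ : G) (l : List G) : F α := ιG α g * elemP α e₀ l

/-- The set `E(G)` of projections `e₀(1-e₁)⋯(1-eₙ)` in `𝔽(G,A)`, with `e₀, …, eₙ`
idempotents of `G`. -/
def EG : Set (F α) :=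
  {x | ∃ (e₀ : G) (l : List G), e₀ * e₀ = e₀ ∧ (∀ e ∈ l, e * e = e) ∧ x = elemP α e₀ l}

/-- The inverse semigroup `G_E = {g·p | g ∈ G, p ∈ E(G)}` inside `𝔽(G,A)`. -/
def GE : Set (F α) :=
  {x | ∃ (g e₀ : G) (l : List G),
    e₀ * e₀ = e₀ ∧ (∀ e ∈ l, e * e = e) ∧ x = elemGE α g e₀ l}

/-- The extension of the `G`-action along a list: `(id - α e₁)∘⋯∘(id - α eₙ)`. -/
def actL : List G → A → A
  | [] => id
  | e :: l => fun a => actL l a - α e (actL l a)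

/-- The extension of the `G`-action to `E(G)`:
`α_{e₀(1-e₁)⋯(1-eₙ)} = α_{e₀}∘(id - α_{e₁})∘⋯∘(id - α_{eₙ})`. -/
def actP (e₀ : G) (l : List G) : A → A := fun a => α e₀ (actL α l a)

/-- The extension of the `G`-action to `G_E`: `α_{g·p} = α_g ∘ α_p`. -/
def actGE (g e₀ : G) (l : List G) : A → A := fun a => α g (actP α e₀ l a)

/-- The action of `k* = (g·e₀(1-e₁)⋯(1-eₙ))* = g*·(g e₀ g*)(1 - g e₁ g*)⋯(1 - g eₙ g*)`,
for `k = g·e₀(1-e₁)⋯(1-eₙ) ∈ G_E`. -/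
def actStar (g e₀ : G) (l : List G) : A → A :=
  fun a => α (star g) (actP α (g * e₀ * star g) (l.map fun e => g * e * star g) a)

/-- The subalgebra `A_{k k*} = α_{k k*}(A) = (α_k ∘ α_{k*})(A)`,
for `k = g·e₀(1-e₁)⋯(1-eₙ) ∈ G_E`. -/
def carrier (g e₀ : G) (l : List G) : Set A :=
  Set.range fun a => actGE α g e₀ l (actStar α g e₀ l a)

/-- `S` is a sub-inverse semigroup of `G`: a subset closed under multiplication and
involution. -/
structure IsSubInvSemigroup (S : Set G) : Prop where
  mul_mem : ∀ {a b : G}, a ∈ S → b ∈ S → a * b ∈ S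
  star_mem : ∀ {a : G}, a ∈ S → star a ∈ S

variable (S : Set G)

/-- The set `E(H')` of projections `e₀(1-e₁)⋯(1-eₙ)` with `e₀, …, eₙ` idempotents of
`H' = S`. -/
def EH : Set (F α) :=
  {x | ∃ (e₀ : G) (l : List G), (e₀ ∈ S ∧ e₀ * e₀ = e₀) ∧ (∀ e ∈ l, e ∈ S ∧ e * e = e) ∧
    x = elemP α e₀ l}

/-- `H⁽⁰⁾`: the set of nonzero minimal projections of `E(H')`
(where `q ≤ p` means `q p = q`). -/
def H0 : Set (F α) :=
  {p | p ∈ EH α S ∧ p ≠ 0 ∧ ∀ q ∈ EH α S, q ≠ 0 → q * p = q → q = p}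

/-- The groupoid `H = {t·e | t ∈ H', e ∈ H⁽⁰⁾} \ {0}` associated to `H'`. -/
def Hgpd : Set (F α) :=
  {x | x ≠ 0 ∧ ∃ t ∈ S, ∃ e ∈ H0 α S, x = ιG α t * e}

/-- `G_H = {g·e | g ∈ G, e ∈ H⁽⁰⁾, g* g ≥ e} \ {0}`. -/
def GH : Set (F α) :=
  {x | x ≠ 0 ∧ ∃ (g : G), ∃ e ∈ H0 α S, x = ιG α g * e ∧ e * ιG α (star g * g) = e}

/-- The relation `≡` on `G_H`: `g ≡ h` iff `g t = h` for some `t ∈ H`. -/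
def equivH (x y : F α) : Prop := ∃ t ∈ Hgpd α S, x * t = y

end GAlgebra

/-- For an assertion `P`, the scalar `[P]` which is `1` if `P` is true and `0` if `P`
is false. -/
def ind (P : Prop) : ℂ := @ite _ P (Classical.propDecidable P) 1 0

end Green

/-! An element `x` of `G_H` is a partial isometry whose source projection `x* x` is a minimal
projection of `E(H')`; hence any `y ∈ G_H` with `y = y·(x* x)` has the same source projection.
Applied to `y = s* h` this gives `h* s s* h = h* h`, and compressing the projection `s s*`, which
commutes with `h h*`, by `h h*` yields (a). For (b), minimality gives `w* w = u* u` and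
`w w* = g* g` for `u = s* h` and `w = g* u`; so the commuting projections `u u*` and `g g*`
dominate each other and coincide, and `w* ∈ H` witnesses `u ≡ g`. -/

namespace InverseSemigroup

variable {G : Type*} [InverseSemigroup G]

instance : InvolutiveStar G where
  star_involutive g :=
    (star_unique (star g) g (star_mul_self_mul_star g) (mul_star_mul_self g)).symm

lemma star_eq_of_isIdempotentElem {e : G} (he : IsIdempotentElem e) : star e = e :=
  (star_unique e e (by rw [he.eq, he.eq]) (by rw [he.eq, he.eq])).symm

lemma isIdempotentElem_star_mul_self (g : G) : IsIdempotentElem (star g * g) := by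
  rw [IsIdempotentElem, ← mul_assoc, star_mul_self_mul_star]

lemma isIdempotentElem_mul_star_self (g : G) : IsIdempotentElem (g * star g) := by
  rw [IsIdempotentElem, ← mul_assoc, mul_star_mul_self]

lemma isIdempotentElem_mul {e f : G} (he : IsIdempotentElem e) (hf : IsIdempotentElem f) :
    IsIdempotentElem (e * f) := by
  set x := e * f
  -- `f x* e` is an inverse of `x = e f`, hence equal to `x*`; it is visibly idempotent.
  have hinv : f * star x * e = star x := by
    refine star_unique x _ ?_ ?_
    · calc x * (f * star x * e) * x = e * (f * f) * star x * (e * e) * f := by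
            simp only [x, mul_assoc]
        _ = x * star x * x := by rw [hf.eq, he.eq]; simp only [x, mul_assoc]
        _ = x := mul_star_mul_self x
    · calc f * star x * e * x * (f * star x * e)
          = f * (star x * (e * e) * (f * f) * star x) * e := by simp only [x, mul_assoc]
        _ = f * (star x * x * star x) * e := by rw [he.eq, hf.eq]; simp only [x, mul_assoc]
        _ = f * star x * e := by rw [star_mul_self_mul_star, mul_assoc]
  have hstar : IsIdempotentElem (star x) := by
    rw [IsIdempotentElem, ← hinv]
    calc f * star x * e * (f * star x * e) = f * (star x * x * star x) * e := by
          simp only [x, mul_assoc]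
      _ = f * star x * e := by rw [star_mul_self_mul_star, mul_assoc]
  rwa [← star_star x, star_eq_of_isIdempotentElem hstar]

lemma commute_of_isIdempotentElem {e f : G} (he : IsIdempotentElem e)
    (hf : IsIdempotentElem f) : Commute e f := by
  -- `f e` is an inverse of the idempotent `e f`, so equals `(e f)* = e f`.
  have hinv : f * e = star (e * f) := by
    refine star_unique (e * f) (f * e) ?_ ?_
    · calc e * f * (f * e) * (e * f) = (e * (f * f)) * (e * e) * f := by simp only [mul_assoc]
        _ = e * f := by rw [he.eq, hf.eq, mul_assoc (e * f) e f, (isIdempotentElem_mul he hf).eq]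
    · calc f * e * (e * f) * (f * e) = (f * (e * e)) * (f * f) * e := by simp only [mul_assoc]
        _ = f * e := by rw [he.eq, hf.eq, mul_assoc (f * e) f e, (isIdempotentElem_mul hf he).eq]
  rw [Commute, SemiconjBy, hinv, star_eq_of_isIdempotentElem (isIdempotentElem_mul he hf)]

lemma conj_mul_self {e : G} (g : G) (he : IsIdempotentElem e) :
    g * e * star g * g = g * e := by
  rw [mul_assoc, mul_assoc g e,
    (commute_of_isIdempotentElem he (isIdempotentElem_star_mul_self g)).eq, ← mul_assoc,
    ← mul_assoc, mul_star_mul_self]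

lemma isIdempotentElem_conj {e : G} (g : G) (he : IsIdempotentElem e) :
    IsIdempotentElem (g * e * star g) := by
  rw [IsIdempotentElem, ← mul_assoc, ← mul_assoc, conj_mul_self g he, mul_assoc g e e, he.eq]

end InverseSemigroup

lemma Commute.mul_eq_right_of_mul_mul_eq {R : Type*} [Semigroup R] {p q : R}
    (hpq : Commute p q) (hq : IsIdempotentElem q) (h : q * p * q = q) : p * q = q := by
  rwa [← hpq.eq, mul_assoc, hq.eq] at h

lemma Commute.eq_of_mul_mul_eq {R : Type*} [Semigroup R] {p q : R} (hpq : Commute p q)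
    (hp : IsIdempotentElem p) (hq : IsIdempotentElem q) (h₁ : p * q * p = p)
    (h₂ : q * p * q = q) : p = q :=
  calc p = q * p := (hpq.symm.mul_eq_right_of_mul_mul_eq hp h₁).symm
    _ = p * q := hpq.eq.symm
    _ = q := hpq.mul_eq_right_of_mul_mul_eq hq h₂

namespace Green

open InverseSemigroup

section GAlgebra

variable {G : Type*} [InverseSemigroup G]
variable {A : Type*} [NonUnitalNormedRing A] [StarRing A] [NormedSpace ℂ A]
variable (α : G → A →⋆ₙₐ[ℂ] A)

lemma mkAlgHom_star (x : FreeStar (A ⊕ G)) :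
    RingQuot.mkAlgHom ℂ (Rel α) (star x) = star (RingQuot.mkAlgHom ℂ (Rel α) x) := by
  have hcoe (y : FreeStar (A ⊕ G)) :
      RingQuot.mkAlgHom ℂ (Rel α) y = RingQuot.mkRingHom (Rel α) y := by
    rw [← RingQuot.mkAlgHom_coe ℂ (Rel α)]; rfl
  rw [hcoe, hcoe, RingQuot.mkRingHom_def]
  rfl

lemma ιG_mul (g h : G) : ιG α (g * h) = ιG α g * ιG α h := by
  rw [ιG, RingQuot.mkAlgHom_rel ℂ (Rel.mul_G g h), map_mul, ιG, ιG]

lemma ιG_star (g : G) : ιG α (star g) = star (ιG α g) := by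
  rw [ιG, RingQuot.mkAlgHom_rel ℂ (Rel.star_G g), mkAlgHom_star, ιG]

lemma commute_ιG {e f : G} (he : IsIdempotentElem e) (hf : IsIdempotentElem f) :
    Commute (ιG α e) (ιG α f) := by
  rw [Commute, SemiconjBy, ← ιG_mul, ← ιG_mul, (commute_of_isIdempotentElem he hf).eq]

lemma isIdempotentElem_ιG {e : G} (he : IsIdempotentElem e) : IsIdempotentElem (ιG α e) := by
  rw [IsIdempotentElem, ← ιG_mul, he.eq]

lemma isSelfAdjoint_ιG {e : G} (he : IsIdempotentElem e) : IsSelfAdjoint (ιG α e) := by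
  rw [isSelfAdjoint_iff, ← ιG_star, star_eq_of_isIdempotentElem he]

lemma ιG_mul_one_sub_ιG (g : G) {e : G} (he : IsIdempotentElem e) :
    ιG α g * (1 - ιG α e) = (1 - ιG α (g * e * star g)) * ιG α g := by
  rw [mul_sub, sub_mul, mul_one, one_mul, ← ιG_mul, ← ιG_mul, conj_mul_self g he]

def prodCompl (l : List G) : F α := (l.map fun e => 1 - ιG α e).prod

lemma prodCompl_cons (e : G) (l : List G) :
    prodCompl α (e :: l) = (1 - ιG α e) * prodCompl α l := by
  simp [prodCompl]

lemma elemP_eq_mul_prodCompl (e₀ : G) (l : List G) :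
    elemP α e₀ l = ιG α e₀ * prodCompl α l := by
  suffices ∀ x : F α, l.foldl (fun p e => p - p * ιG α e) x = x * prodCompl α l from this _
  induction l with
  | nil => simp [prodCompl]
  | cons e l ih =>
    intro x
    rw [List.foldl_cons, ih, prodCompl_cons, ← mul_assoc, mul_sub, mul_one]

variable {α}

section prodCompl

variable {l m : List G} (hl : ∀ e ∈ l, IsIdempotentElem e)
  (hm : ∀ e ∈ m, IsIdempotentElem e)
include hl

lemma commute_ιG_prodCompl {f : G} (hf : IsIdempotentElem f) :
    Commute (ιG α f) (prodCompl α l) :=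
  Commute.list_prod_right _ _ fun _ hx => by
    obtain ⟨e, he, rfl⟩ := List.mem_map.mp hx
    exact (Commute.one_right _).sub_right (commute_ιG α hf (hl e he))

include hm in
lemma commute_prodCompl_prodCompl : Commute (prodCompl α l) (prodCompl α m) :=
  Commute.list_prod_left _ _ fun _ hx => by
    obtain ⟨e, he, rfl⟩ := List.mem_map.mp hx
    exact (Commute.one_left _).sub_left (commute_ιG_prodCompl hm (hl e he))

lemma isIdempotentElem_prodCompl : IsIdempotentElem (prodCompl α l) := by
  induction l with
  | nil => simp [prodCompl, IsIdempotentElem]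
  | cons e l ih =>
    have hl' := fun e' he' => hl e' (List.mem_cons_of_mem e he')
    have he := hl e List.mem_cons_self
    rw [prodCompl_cons]
    exact (isIdempotentElem_ιG α he).one_sub.mul_of_commute
      ((Commute.one_left _).sub_left (commute_ιG_prodCompl hl' he)) (ih hl')

lemma isSelfAdjoint_prodCompl : IsSelfAdjoint (prodCompl α l) := by
  induction l with
  | nil => simp [prodCompl]
  | cons e l ih =>
    have hl' := fun e' he' => hl e' (List.mem_cons_of_mem e he')
    have he := hl e List.mem_cons_self
    rw [prodCompl_cons]
    exact ((IsSelfAdjoint.one _).sub (isSelfAdjoint_ιG α he)).commute_iff (ih hl') |>.mp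
      ((Commute.one_left _).sub_left (commute_ιG_prodCompl hl' he))

lemma ιG_mul_prodCompl (g : G) :
    ιG α g * prodCompl α l = prodCompl α (l.map fun e => g * e * star g) * ιG α g := by
  induction l with
  | nil => simp [prodCompl]
  | cons e l ih =>
    have hl' := fun e' he' => hl e' (List.mem_cons_of_mem e he')
    rw [prodCompl_cons, List.map_cons, prodCompl_cons, ← mul_assoc,
      ιG_mul_one_sub_ιG α g (hl e List.mem_cons_self), mul_assoc, ih hl', ← mul_assoc]

end prodCompl

lemma ιG_mem_EG {e : G} (he : IsIdempotentElem e) : ιG α e ∈ EG α :=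
  ⟨e, [], he, by simp, rfl⟩

section EG

variable {p q : F α}

lemma isIdempotentElem_of_mem_EG (hp : p ∈ EG α) : IsIdempotentElem p := by
  obtain ⟨e₀, l, he₀, hl, rfl⟩ := hp
  rw [elemP_eq_mul_prodCompl]
  exact (isIdempotentElem_ιG α he₀).mul_of_commute (commute_ιG_prodCompl hl he₀)
    (isIdempotentElem_prodCompl hl)

lemma isSelfAdjoint_of_mem_EG (hp : p ∈ EG α) : IsSelfAdjoint p := by
  obtain ⟨e₀, l, he₀, hl, rfl⟩ := hp
  rw [elemP_eq_mul_prodCompl]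
  exact (isSelfAdjoint_ιG α he₀).commute_iff (isSelfAdjoint_prodCompl hl) |>.mp
    (commute_ιG_prodCompl hl he₀)

lemma commute_of_mem_EG (hp : p ∈ EG α) (hq : q ∈ EG α) : Commute p q := by
  obtain ⟨e₀, l, he₀, hl, rfl⟩ := hp
  obtain ⟨f₀, m, hf₀, hm, rfl⟩ := hq
  rw [elemP_eq_mul_prodCompl, elemP_eq_mul_prodCompl]
  exact ((commute_ιG α he₀ hf₀).mul_right (commute_ιG_prodCompl hm he₀)).mul_left
    ((commute_ιG_prodCompl hl hf₀).symm.mul_right (commute_prodCompl_prodCompl hl hm))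

lemma ιG_mul_elemP_mul_ιG_star (g : G) {e₀ : G} {l : List G} (he₀ : IsIdempotentElem e₀)
    (hl : ∀ e ∈ l, IsIdempotentElem e) :
    ιG α g * elemP α e₀ l * ιG α (star g) =
      elemP α (g * e₀ * star g) (l.map fun e => g * e * star g) := by
  have hl' : ∀ e ∈ l.map (fun e => g * e * star g), IsIdempotentElem e :=
    List.forall_mem_map.mpr fun e he => isIdempotentElem_conj g (hl e he)
  calc ιG α g * elemP α e₀ l * ιG α (star g)
      = ιG α g * (prodCompl α l * ιG α e₀) * ιG α (star g) := by
        rw [elemP_eq_mul_prodCompl, (commute_ιG_prodCompl hl he₀).eq]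
    _ = prodCompl α (l.map fun e => g * e * star g) *
          (ιG α g * ιG α e₀ * ιG α (star g)) := by
        rw [← mul_assoc (ιG α g), ιG_mul_prodCompl hl g]; simp only [mul_assoc]
    _ = elemP α (g * e₀ * star g) (l.map fun e => g * e * star g) := by
        rw [← ιG_mul, ← ιG_mul, elemP_eq_mul_prodCompl,
          (commute_ιG_prodCompl hl' (isIdempotentElem_conj g he₀)).eq]

lemma conj_mem_EG (g : G) (hp : p ∈ EG α) : ιG α g * p * ιG α (star g) ∈ EG α := by
  obtain ⟨e₀, l, he₀, hl, rfl⟩ := hp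
  exact ⟨_, _, isIdempotentElem_conj g he₀,
    List.forall_mem_map.mpr fun e he => isIdempotentElem_conj g (hl e he),
    ιG_mul_elemP_mul_ιG_star g he₀ hl⟩

lemma ιG_mul_mul_star_of_mem_EG (g : G) (hp : p ∈ EG α) :
    ιG α g * p * star (ιG α g * p) = ιG α g * p * ιG α (star g) := by
  rw [star_mul, (isSelfAdjoint_of_mem_EG hp).star_eq, ← ιG_star, ← mul_assoc,
    mul_assoc (ιG α g), (isIdempotentElem_of_mem_EG hp).eq]

lemma star_mul_self_ιG_mul_of_mem_EG {g : G} (hp : p ∈ EG α)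
    (hpg : p * ιG α (star g * g) = p) : star (ιG α g * p) * (ιG α g * p) = p := by
  rw [star_mul, (isSelfAdjoint_of_mem_EG hp).star_eq, ← ιG_star, mul_assoc,
    ← mul_assoc _ (ιG α g), ← ιG_mul, ← mul_assoc, hpg, (isIdempotentElem_of_mem_EG hp).eq]

end EG

variable {S : Set G}

lemma EH_subset_EG : EH α S ⊆ EG α := by
  rintro _ ⟨e₀, l, he₀, hl, rfl⟩
  exact ⟨e₀, l, he₀.2, fun e he => (hl e he).2, rfl⟩

section GH

variable {x y p : F α}

lemma star_mul_self_mem_H0_of_mem_GH (hx : x ∈ GH α S) : star x * x ∈ H0 α S := by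
  obtain ⟨-, g, e, he, rfl, hge⟩ := hx
  rwa [star_mul_self_ιG_mul_of_mem_EG (EH_subset_EG he.1) hge]

lemma mul_star_mul_self_of_mem_GH (hx : x ∈ GH α S) : x * star x * x = x := by
  obtain ⟨-, g, e, he, rfl, hge⟩ := hx
  have he' := EH_subset_EG he.1
  rw [mul_assoc, star_mul_self_ιG_mul_of_mem_EG he' hge, mul_assoc,
    (isIdempotentElem_of_mem_EG he').eq]

lemma mul_star_self_mem_EG_of_mem_GH (hx : x ∈ GH α S) : x * star x ∈ EG α := by
  obtain ⟨-, g, e, he, rfl, -⟩ := hx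
  rw [ιG_mul_mul_star_of_mem_EG g (EH_subset_EG he.1)]
  exact conj_mem_EG g (EH_subset_EG he.1)

lemma star_mul_self_eq_of_mul_eq (hy : y ∈ GH α S) (hp : p ∈ H0 α S) (hyp : y * p = y) :
    star y * y = p := by
  have hq := star_mul_self_mem_H0_of_mem_GH hy
  exact hp.2.2 _ hq.1 hq.2.1 (by rw [mul_assoc, hyp])

lemma ιG_mul_mul_star_self_of_mem_GH {σ : G} (hv : x ∈ GH α S)
    (hσv : ιG α (star σ) * x ∈ GH α S) :
    ιG α (σ * star σ) * (x * star x) = x * star x := by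
  have hsrc : star (ιG α (star σ) * x) * (ιG α (star σ) * x) = star x * x :=
    star_mul_self_eq_of_mul_eq hσv (star_mul_self_mem_H0_of_mem_GH hv)
      (by rw [mul_assoc, ← mul_assoc x, mul_star_mul_self_of_mem_GH hv])
  rw [star_mul, ← ιG_star, star_star, mul_assoc, ← mul_assoc (ιG α σ), ← ιG_mul,
    ← mul_assoc] at hsrc
  have hvv := mul_star_self_mem_EG_of_mem_GH hv
  refine (commute_of_mem_EG (ιG_mem_EG (isIdempotentElem_mul_star_self σ)) hvv)
    |>.mul_eq_right_of_mul_mul_eq (isIdempotentElem_of_mem_EG hvv) ?_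
  calc x * star x * ιG α (σ * star σ) * (x * star x)
      = x * (star x * ιG α (σ * star σ) * x) * star x := by simp only [mul_assoc]
    _ = x * star x := by rw [hsrc, ← mul_assoc, mul_star_mul_self_of_mem_GH hv]

end GH

variable (hS : IsSubInvSemigroup S)
include hS

lemma conj_mem_EH {t : G} (ht : t ∈ S) {p : F α} (hp : p ∈ EH α S) :
    ιG α t * p * ιG α (star t) ∈ EH α S := by
  obtain ⟨e₀, l, he₀, hl, rfl⟩ := hp
  have hconj {e : G} (he : e ∈ S) : t * e * star t ∈ S :=
    hS.mul_mem (hS.mul_mem ht he) (hS.star_mem ht)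
  exact ⟨_, _, ⟨hconj he₀.1, isIdempotentElem_conj t he₀.2⟩,
    List.forall_mem_map.mpr fun e he =>
      ⟨hconj (hl e he).1, isIdempotentElem_conj t (hl e he).2⟩,
    ιG_mul_elemP_mul_ιG_star t he₀.2 fun e he => (hl e he).2⟩

lemma ιG_mul_mem_EH {f : G} (hf : f ∈ S) (hfi : IsIdempotentElem f) {p : F α}
    (hp : p ∈ EH α S) : ιG α f * p ∈ EH α S := by
  obtain ⟨e₀, l, he₀, hl, rfl⟩ := hp
  refine ⟨f * e₀, l, ⟨hS.mul_mem hf he₀.1, isIdempotentElem_mul hfi he₀.2⟩, hl, ?_⟩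
  rw [elemP_eq_mul_prodCompl, elemP_eq_mul_prodCompl, ιG_mul, mul_assoc]

lemma exists_eq_ιG_mul_of_mem_Hgpd {x : F α} (hx : x ∈ Hgpd α S) :
    ∃ t ∈ S, ∃ e ∈ H0 α S, x = ιG α t * e ∧ e * ιG α (star t * t) = e := by
  obtain ⟨hx0, t, ht, e, he, rfl⟩ := hx
  have he' := EH_subset_EG he.1
  have htt := isIdempotentElem_star_mul_self t
  have hte : ιG α t * (ιG α (star t * t) * e) = ιG α t * e := by
    rw [← mul_assoc, ← ιG_mul, ← mul_assoc, mul_star_mul_self]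
  -- `ιG (t* t) e` is a nonzero element of `E(H')` below the minimal projection `e`
  have hq : ιG α (star t * t) * e = e :=
    he.2.2 _ (ιG_mul_mem_EH hS (hS.mul_mem (hS.star_mem ht) ht) htt he.1)
      (fun h0 => hx0 (by rw [← hte, h0, mul_zero]))
      (by rw [mul_assoc, (isIdempotentElem_of_mem_EG he').eq])
  exact ⟨t, ht, e, he, rfl, (commute_of_mem_EG he' (ιG_mem_EG htt)).eq.trans hq⟩

lemma Hgpd_subset_GH : Hgpd α S ⊆ GH α S := fun x hx => by
  obtain ⟨t, -, e, he, hxe, hte⟩ := exists_eq_ιG_mul_of_mem_Hgpd hS hx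
  exact ⟨hx.1, t, e, he, hxe, hte⟩

lemma mul_star_self_mem_EH_of_mem_Hgpd {x : F α} (hx : x ∈ Hgpd α S) :
    x * star x ∈ EH α S := by
  obtain ⟨-, t, ht, e, he, rfl⟩ := hx
  rw [ιG_mul_mul_star_of_mem_EG t (EH_subset_EG he.1)]
  exact conj_mem_EH hS ht he.1

lemma star_mem_Hgpd {x : F α} (hx : x ∈ Hgpd α S) (hxx : x * star x ∈ H0 α S) :
    star x ∈ Hgpd α S := by
  obtain ⟨t, ht, e, he, rfl, hte⟩ := exists_eq_ιG_mul_of_mem_Hgpd hS hx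
  have he' := EH_subset_EG he.1
  refine ⟨star_ne_zero.mpr hx.1, star t, hS.star_mem ht, _, hxx, ?_⟩
  rw [ιG_mul_mul_star_of_mem_EG t he', star_mul, (isSelfAdjoint_of_mem_EG he').star_eq,
    ← ιG_star]
  calc e * ιG α (star t) = e * ιG α (star t * t) * ιG α (star t) := by rw [hte]
    _ = ιG α (star t) * (ιG α t * e * ιG α (star t)) := by
      rw [(commute_of_mem_EG he' (ιG_mem_EG (isIdempotentElem_star_mul_self t))).eq, ιG_mul]
      simp only [mul_assoc]

lemma star_mul_mul_star_eq_star_mul_self {g u : F α} (hg : g ∈ GH α S)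
    (hw : star g * u ∈ Hgpd α S) : star g * u * star (star g * u) = star g * g := by
  have hg₀ := star_mul_self_mem_H0_of_mem_GH hg
  refine hg₀.2.2 _ (mul_star_self_mem_EH_of_mem_Hgpd hS hw) ?_ ?_
  · intro h0
    apply hw.1
    rw [← mul_star_mul_self_of_mem_GH (Hgpd_subset_GH hS hw), h0, zero_mul]
  · rw [mul_assoc, star_mul, star_star, mul_assoc (star u) g, ← mul_assoc g,
      mul_star_mul_self_of_mem_GH hg]

lemma mul_star_self_eq_and_equivH_of_star_mul_mem_Hgpd {g u : F α} (hg : g ∈ GH α S)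
    (hu : u ∈ GH α S) (hw : star g * u ∈ Hgpd α S) :
    g * star g = u * star u ∧ equivH α S u g := by
  have hsrc : star (star g * u) * (star g * u) = star u * u :=
    star_mul_self_eq_of_mul_eq (Hgpd_subset_GH hS hw) (star_mul_self_mem_H0_of_mem_GH hu)
      (by rw [mul_assoc, ← mul_assoc u, mul_star_mul_self_of_mem_GH hu])
  have hrange := star_mul_mul_star_eq_star_mul_self hS hg hw
  rw [star_mul, star_star] at hsrc hrange
  have hgg := mul_star_self_mem_EG_of_mem_GH hg
  have huu := mul_star_self_mem_EG_of_mem_GH hu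
  have hproj : g * star g = u * star u := by
    refine (commute_of_mem_EG hgg huu).eq_of_mul_mul_eq (isIdempotentElem_of_mem_EG hgg)
      (isIdempotentElem_of_mem_EG huu) ?_ ?_
    · calc g * star g * (u * star u) * (g * star g)
          = g * (star g * u * (star u * g)) * star g := by simp only [mul_assoc]
        _ = g * star g := by rw [hrange, ← mul_assoc, mul_star_mul_self_of_mem_GH hg]
    · calc u * star u * (g * star g) * (u * star u)
          = u * (star u * g * (star g * u)) * star u := by simp only [mul_assoc]
        _ = u * star u := by rw [hsrc, ← mul_assoc, mul_star_mul_self_of_mem_GH hu]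
  refine ⟨hproj, star (star g * u), star_mem_Hgpd hS hw ?_, ?_⟩
  · rw [star_mul, star_star, hrange]
    exact star_mul_self_mem_H0_of_mem_GH hg
  · rw [star_mul, star_star, ← mul_assoc, ← hproj, mul_star_mul_self_of_mem_GH hg]

end GAlgebra

theorem ssstar_ge_hhstar_and_equiv_general
    {G : Type*} [InverseSemigroup G]
    {A : Type*} [NonUnitalNormedRing A] [StarRing A] [NormedSpace ℂ A]
    (α : G → A →⋆ₙₐ[ℂ] A)
    (S : Set G) (hS : IsSubInvSemigroup S)
    (s : G) (h : F α) (hh : h ∈ GH α S) :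
    (ιG α (star s) * h ∈ GH α S →
      ιG α (s * star s) * (h * star h) = h * star h) ∧
    (∀ g ∈ GH α S, ιG α (star s) * h ∈ GH α S →
      star g * (ιG α (star s) * h) ∈ Hgpd α S →
      g * star g = (ιG α (star s) * h) * star (ιG α (star s) * h) ∧
        equivH α S (ιG α (star s) * h) g) :=
  ⟨ιG_mul_mul_star_self_of_mem_GH hh,
    fun _ hg hu hw => mul_star_self_eq_and_equivH_of_star_mul_mem_Hgpd hS hg hu hw⟩

/-- Let `G` be an inverse semigroup, `H' = S ⊆ G` a finite sub-inverse
semigroup and `A` a `G`-algebra.  (a) For all `s ∈ G` and `h ∈ G_H` with `s*·h ∈ G_H`,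
one has `s s*·h h* = h h*` (i.e. `s s* ≥ h h*`) in `𝔽(G,A)`.  (b) If moreover `g ∈ G_H`
satisfies `g*·s*·h ∈ H`, then `g g* = (s* h)(s* h)*` and `s*·h ≡ g`. -/
theorem ssstar_ge_hhstar_and_equiv
    {G : Type*} [InverseSemigroup G]
    {A : Type*} [NonUnitalNormedRing A] [StarRing A] [CStarRing A] [NormedSpace ℂ A]
    [IsScalarTower ℂ A A] [SMulCommClass ℂ A A] [StarModule ℂ A] [CompleteSpace A]
    (α : G → A →⋆ₙₐ[ℂ] A) (hα : IsGAlgebra α)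
    (S : Set G) (hS : IsSubInvSemigroup S) (hSfin : S.Finite)
    (s : G) (h : F α) (hh : h ∈ GH α S) :
    (ιG α (star s) * h ∈ GH α S →
      ιG α (s * star s) * (h * star h) = h * star h) ∧
    (∀ g ∈ GH α S, ιG α (star s) * h ∈ GH α S →
      star g * (ιG α (star s) * h) ∈ Hgpd α S →
      g * star g = (ιG α (star s) * h) * star (ιG α (star s) * h) ∧
        equivH α S (ιG α (star s) * h) g) :=
  ssstar_ge_hhstar_and_equiv_general α S hS s h hh

end Green
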